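/- arXiv:2406.16311 — 3 statements merged into one kernel-verified Lean document; each statement's English description precedes it below -/
import Mathlib

section
/- The number of Gaussian integers n with N(n) ≤ x equals πx + O(√x), where π is the circle constant. -/
open Filter Asymptotics MeasureTheory Set ENNReal

noncomputable section

namespace GaussCircle

/-- The unit square based at the Gaussian integer `n`. -/
def usq (n : GaussianInt) : Set ℂ :=
  Complex.measurableEquivRealProd ⁻¹'
    (Set.Ico (n.re : ℝ) (n.re + 1) ×ˢ Set.Ico (n.im : ℝ) (n.im + 1))

lemma mem_usq {n : GaussianInt} {z : ℂ} :
    z ∈ usq n ↔ ((n.re : ℝ) ≤ z.re ∧ z.re < n.re + 1) ∧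
      ((n.im : ℝ) ≤ z.im ∧ z.im < n.im + 1) := Iff.rfl

lemma measurableSet_usq (n : GaussianInt) : MeasurableSet (usq n) :=
  Complex.measurableEquivRealProd.measurable (measurableSet_Ico.prod measurableSet_Ico)

lemma volume_usq (n : GaussianInt) : volume (usq n) = 1 := by
  rw [usq, Complex.volume_preserving_equiv_real_prod.measure_preimage
    (measurableSet_Ico.prod measurableSet_Ico).nullMeasurableSet,
    Measure.volume_eq_prod, Measure.prod_prod, Real.volume_Ico, Real.volume_Ico]
  simp

lemma usq_disjoint {m n : GaussianInt} (h : m ≠ n) : Disjoint (usq m) (usq n) := by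
  rw [Set.disjoint_left]
  intro z hm hn
  apply h
  rw [mem_usq] at hm hn
  have h1 : m.re = ⌊z.re⌋ := by
    rw [eq_comm, Int.floor_eq_iff]; exact_mod_cast hm.1
  have h2 : m.im = ⌊z.im⌋ := by
    rw [eq_comm, Int.floor_eq_iff]; exact_mod_cast hm.2
  have h3 : n.re = ⌊z.re⌋ := by
    rw [eq_comm, Int.floor_eq_iff]; exact_mod_cast hn.1
  have h4 : n.im = ⌊z.im⌋ := by
    rw [eq_comm, Int.floor_eq_iff]; exact_mod_cast hn.2
  cases m; cases n; simp_all

lemma abs_sub_le {n : GaussianInt} {z : ℂ} (hz : z ∈ usq n) :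
    ‖z - n‖ ≤ Real.sqrt 2 := by
  rw [mem_usq] at hz
  rw [Complex.norm_def]
  apply Real.sqrt_le_sqrt
  rw [Complex.normSq_apply, Complex.sub_re, Complex.sub_im,
    ← GaussianInt.intCast_re, ← GaussianInt.intCast_im]
  nlinarith [hz.1.1, hz.1.2, hz.2.1, hz.2.2]

lemma mem_usq_floor (z : ℂ) : z ∈ usq ⟨⌊z.re⌋, ⌊z.im⌋⟩ := by
  rw [mem_usq]
  exact ⟨⟨Int.floor_le _, by push_cast; exact Int.lt_floor_add_one _⟩,
    ⟨Int.floor_le _, by push_cast; exact Int.lt_floor_add_one _⟩⟩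

lemma finite_S (x : ℝ) : {n : GaussianInt | (Zsqrtd.norm n : ℝ) ≤ x}.Finite := by
  set B : ℤ := ⌊x⌋
  apply Set.Finite.of_finite_image (f := fun n : GaussianInt => (n.re, n.im))
  · apply ((Set.finite_Icc (-B) B).prod (Set.finite_Icc (-B) B)).subset
    rintro ⟨a, b⟩ ⟨n, hn, heq⟩
    simp only [Set.mem_setOf_eq] at hn
    obtain ⟨rfl, rfl⟩ : n.re = a ∧ n.im = b := Prod.mk.injEq .. ▸ (by simpa using heq)
    have hB : n.norm ≤ B := Int.le_floor.mpr hn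
    have hnorm : n.norm = n.re * n.re + n.im * n.im := by
      rw [Zsqrtd.norm]; ring
    have h1 := Int.le_self_sq n.re
    have h2 := Int.le_self_sq (-n.re)
    have h3 := Int.le_self_sq n.im
    have h4 := Int.le_self_sq (-n.im)
    constructor <;> constructor <;> simp only [Set.mem_Icc] <;>
      nlinarith [sq_nonneg n.re, sq_nonneg n.im]
  · intro m _ n _ h
    cases m; cases n; simpa using h

end GaussCircle

/-- The norm of a (nonzero) ideal of the Gaussian integers ℤ[i]. -/
def inorm (I : Ideal GaussianInt) : ℕ := Nat.card (GaussianInt ⧸ I)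

/-- The number of Gaussian integers `n` with `N(n) ≤ x` is `πx + O(√x)`. -/
theorem gauss_circle_problem :
    (fun x : ℝ =>
        ((Nat.card {n : GaussianInt // (Zsqrtd.norm n : ℝ) ≤ x} : ℝ) - Real.pi * x))
      =O[atTop] fun x : ℝ => Real.sqrt x := by
  rw [isBigO_iff]
  refine ⟨40, ?_⟩
  filter_upwards [eventually_ge_atTop (2:ℝ)] with x hx
  have hx0 : (0:ℝ) ≤ x := by linarith
  set r := Real.sqrt x with hrdef
  have hrx : r ^ 2 = x := Real.sq_sqrt hx0
  have hr0 : 0 ≤ r := Real.sqrt_nonneg x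
  have hs2 : (0:ℝ) ≤ Real.sqrt 2 := Real.sqrt_nonneg 2
  have hs2le : Real.sqrt 2 ≤ 2 := by
    nlinarith [Real.sq_sqrt (show (0:ℝ) ≤ 2 by norm_num), Real.sqrt_nonneg 2]
  have hr2 : Real.sqrt 2 ≤ r := Real.sqrt_le_sqrt hx
  have hfin := GaussCircle.finite_S x
  set F := hfin.toFinset with hF
  have hcard : (Nat.card {n : GaussianInt // (Zsqrtd.norm n : ℝ) ≤ x}) = F.card :=
    (Nat.card_coe_set_eq _).trans (Set.ncard_eq_toFinset_card _ hfin)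
  have hmemF : ∀ n : GaussianInt, n ∈ F ↔ (Zsqrtd.norm n : ℝ) ≤ x := fun n =>
    hfin.mem_toFinset
  have hvol : volume (⋃ n ∈ F, GaussCircle.usq n) = (F.card : ℝ≥0∞) := by
    rw [measure_biUnion_finset ?_ fun n _ => GaussCircle.measurableSet_usq n]
    · simp [GaussCircle.volume_usq]
    · intro m _ n _ hmn
      exact GaussCircle.usq_disjoint hmn
  have hub : (F.card : ℝ≥0∞) ≤ volume (Metric.closedBall (0:ℂ) (r + Real.sqrt 2)) := by
    rw [← hvol]
    apply measure_mono
    intro z hz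
    simp only [Set.mem_iUnion] at hz
    obtain ⟨n, hn, hzn⟩ := hz
    rw [Metric.mem_closedBall, dist_zero_right]
    have hz' : z = (z - n) + n := by ring
    calc ‖z‖ = ‖(z - n) + n‖ := by rw [← hz']
      _ ≤ ‖z - n‖ + ‖(n : ℂ)‖ := norm_add_le _ _
      _ ≤ Real.sqrt 2 + r := add_le_add (GaussCircle.abs_sub_le hzn) (by
          rw [Complex.norm_def, ← GaussianInt.intCast_real_norm]
          exact Real.sqrt_le_sqrt ((hmemF n).mp hn))
      _ = r + Real.sqrt 2 := by ring
  have hlb : volume (Metric.closedBall (0:ℂ) (r - Real.sqrt 2)) ≤ (F.card : ℝ≥0∞) := by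
    rw [← hvol]
    apply measure_mono
    intro z hz
    rw [Metric.mem_closedBall, dist_zero_right] at hz
    set n : GaussianInt := ⟨⌊z.re⌋, ⌊z.im⌋⟩ with hn
    have hzn : z ∈ GaussCircle.usq n := GaussCircle.mem_usq_floor z
    have habs : ‖(n : ℂ)‖ ≤ r := by
      have h1 : (n : ℂ) = ((n : ℂ) - z) + z := by ring
      calc ‖(n : ℂ)‖ = ‖((n : ℂ) - z) + z‖ := by rw [← h1]
        _ ≤ ‖(n : ℂ) - z‖ + ‖z‖ := norm_add_le _ _
        _ ≤ Real.sqrt 2 + (r - Real.sqrt 2) := add_le_add (by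
              rw [norm_sub_rev]
              exact GaussCircle.abs_sub_le hzn) hz
        _ = r := by ring
    have hnF : n ∈ F := by
      rw [hmemF]
      have : (Zsqrtd.norm n : ℝ) = ‖(n : ℂ)‖ ^ 2 := by
        rw [GaussianInt.intCast_real_norm, Complex.sq_norm]
      rw [this, ← hrx]
      exact pow_le_pow_left₀ (norm_nonneg _) habs 2
    exact Set.mem_iUnion.mpr ⟨n, Set.mem_iUnion.mpr ⟨hnF, hzn⟩⟩
  rw [Complex.volume_closedBall, ← ENNReal.ofReal_coe_nnreal, NNReal.coe_real_pi,
    ← ENNReal.ofReal_pow (by positivity), ← ENNReal.ofReal_mul (by positivity),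
    ← ENNReal.ofReal_natCast] at hub
  rw [Complex.volume_closedBall, ← ENNReal.ofReal_coe_nnreal, NNReal.coe_real_pi,
    ← ENNReal.ofReal_pow (by linarith), ← ENNReal.ofReal_mul (by positivity),
    ← ENNReal.ofReal_natCast] at hlb
  have hub' : (F.card : ℝ) ≤ (r + Real.sqrt 2) ^ 2 * Real.pi :=
    (ENNReal.ofReal_le_ofReal_iff (by positivity)).mp hub
  have hlb' : (r - Real.sqrt 2) ^ 2 * Real.pi ≤ (F.card : ℝ) :=
    (ENNReal.ofReal_le_ofReal_iff (by positivity)).mp hlb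
  rw [hcard, Real.norm_eq_abs, Real.norm_eq_abs, abs_of_nonneg hr0]
  rw [abs_le]
  have hpi4 : Real.pi ≤ 4 := Real.pi_le_four
  have hpi0 : 0 < Real.pi := Real.pi_pos
  have hss : Real.sqrt 2 ^ 2 = 2 := Real.sq_sqrt (by norm_num)
  have hs2ge : (1:ℝ) ≤ Real.sqrt 2 := by nlinarith
  have hr1 : (1:ℝ) ≤ r := le_trans hs2ge hr2
  have key : Real.pi * (2 * (Real.sqrt 2 * r) + 2) ≤ 40 * r := by
    have h1 : Real.sqrt 2 * r ≤ 2 * r := mul_le_mul_of_nonneg_right hs2le hr0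
    have h2 : 2 * (Real.sqrt 2 * r) + 2 ≤ 6 * r := by linarith
    calc Real.pi * (2 * (Real.sqrt 2 * r) + 2) ≤ 4 * (6 * r) :=
          mul_le_mul hpi4 h2 (by positivity) (by norm_num)
      _ ≤ 40 * r := by linarith
  constructor
  · nlinarith [key, hss, hrx, mul_nonneg hpi0.le (mul_nonneg hs2 hr0)]
  · nlinarith [key, hss, hrx, mul_nonneg hpi0.le (mul_nonneg hs2 hr0)]
end
end

section
/- The singular series 𝔖₁(N) = ∏_{p: N(p)>2} (1 - 1/(N(p)-1)²) · ∏_{p: N(p)>2, p | N} (N(p)-1)/(N(p)-2) is a convergent product and is strictly positive for every even Gaussian integer N. -/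
open Filter Asymptotics

noncomputable section

/-- The singular series `𝔖₁(N)`. -/
def singularSeries (N : GaussianInt) : ℝ :=
  (∏' p : {p : Ideal GaussianInt // p.IsPrime ∧ p ≠ ⊥ ∧ 2 < inorm p},
      (1 - (((inorm p.1 : ℝ) - 1) ^ 2)⁻¹)) *
    ∏ᶠ (p : Ideal GaussianInt)
        (_ : p.IsPrime ∧ p ≠ ⊥ ∧ 2 < inorm p ∧ p ∣ Ideal.span {N}),
      ((inorm p : ℝ) - 1) / ((inorm p : ℝ) - 2)


/- Auxiliary -/
open GaussianInt

noncomputable def gaussEquiv : GaussianInt ≃ₗ[ℤ] (Fin 2 → ℤ) where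
  toFun z := ![z.re, z.im]
  invFun v := ⟨v 0, v 1⟩
  left_inv z := rfl
  right_inv v := by funext i; fin_cases i <;> rfl
  map_add' x y := by funext i; fin_cases i <;> simp
  map_smul' c x := by
    funext i
    fin_cases i <;> simp [zsmul_eq_mul, Zsqrtd.re_smul, Zsqrtd.im_smul]

noncomputable def gaussBasis : Module.Basis (Fin 2) ℤ GaussianInt := Module.Basis.ofEquivFun gaussEquiv

instance : Module.Free ℤ GaussianInt := Module.Free.of_basis gaussBasis
instance : Module.Finite ℤ GaussianInt := Module.Finite.of_basis gaussBasis

lemma gauss_algebra_norm (z : GaussianInt) :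
    Algebra.norm ℤ z = z.re ^ 2 + z.im ^ 2 := by
  have h1 : ∀ w, gaussEquiv w = ![w.re, w.im] := fun _ => rfl
  have h2 : ∀ v, gaussEquiv.symm v = ⟨v 0, v 1⟩ := fun _ => rfl
  rw [Algebra.norm_eq_matrix_det gaussBasis, Matrix.det_fin_two]
  simp [Algebra.leftMulMatrix_eq_repr_mul, gaussBasis, h1, h2, Zsqrtd.re_mul, Zsqrtd.im_mul]
  ring

lemma inorm_eq_absNorm (I : Ideal GaussianInt) : inorm I = Ideal.absNorm I := by
  rw [inorm, Ideal.absNorm_apply, Submodule.cardQuot_apply]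

lemma inorm_span_singleton (z : GaussianInt) :
    inorm (Ideal.span {z}) = (z.re ^ 2 + z.im ^ 2).natAbs := by
  rw [inorm_eq_absNorm, Ideal.absNorm_span_singleton, gauss_algebra_norm]

abbrev S := {p : Ideal GaussianInt // p.IsPrime ∧ p ≠ ⊥ ∧ 2 < inorm p}

noncomputable def gen (p : S) : GaussianInt :=
  haveI := IsPrincipalIdealRing.principal p.1
  Submodule.IsPrincipal.generator p.1

lemma span_gen (p : S) : Ideal.span {gen p} = p.1 := by
  haveI := IsPrincipalIdealRing.principal p.1
  exact Ideal.span_singleton_generator p.1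

noncomputable def emb (p : S) : Fin 2 → ℤ := ![(gen p).re, (gen p).im]

lemma emb_inj : Function.Injective emb := by
  intro p q h
  have h0 := congrFun h 0
  have h1 := congrFun h 1
  simp [emb] at h0 h1
  have : gen p = gen q := Zsqrtd.ext h0 h1
  have := (span_gen p).symm.trans (by rw [this, span_gen q])
  exact Subtype.ext this

lemma inorm_ge (p : S) :
    (max (gen p).re.natAbs (gen p).im.natAbs) ^ 2 ≤ inorm p.1 := by
  rw [← span_gen p, inorm_span_singleton]
  have h : ((gen p).re ^ 2 + (gen p).im ^ 2).natAbs = (gen p).re.natAbs ^ 2 + (gen p).im.natAbs ^ 2 := by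
    rw [Int.natAbs_add_of_nonneg (sq_nonneg _) (sq_nonneg _), Int.natAbs_pow, Int.natAbs_pow]
  rw [h]
  rcases max_cases (gen p).re.natAbs (gen p).im.natAbs with ⟨h1, _⟩ | ⟨h1, _⟩ <;> rw [h1] <;> nlinarith

lemma gen_max_pos (p : S) : 1 ≤ max (gen p).re.natAbs (gen p).im.natAbs := by
  by_contra h
  push_neg at h
  have h0 : (gen p).re.natAbs = 0 ∧ (gen p).im.natAbs = 0 := by omega
  have hg : gen p = 0 := Zsqrtd.ext (Int.natAbs_eq_zero.mp h0.1) (Int.natAbs_eq_zero.mp h0.2)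
  have := span_gen p
  rw [hg, Set.singleton_zero, Ideal.span_zero] at this
  exact p.2.2.1 this.symm

noncomputable def F (p : S) : ℝ := (((inorm p.1 : ℝ) - 1) ^ 2)⁻¹

lemma three_le (p : S) : (3 : ℝ) ≤ (inorm p.1 : ℝ) := by
  exact_mod_cast p.2.2.2

lemma F_nonneg (p : S) : 0 ≤ F p := by
  have := three_le p
  unfold F
  positivity

lemma F_le_quarter (p : S) : F p ≤ 4⁻¹ := by
  have h := three_le p
  rw [F]
  rw [inv_le_inv₀ (by nlinarith) (by norm_num)]
  nlinarith

lemma F_le (p : S) : F p ≤ 4 * ‖emb p‖ ^ (-(4:ℝ)) := by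
  set m : ℕ := max (gen p).re.natAbs (gen p).im.natAbs with hm
  have hm1 : 1 ≤ m := gen_max_pos p
  have hnorm : ‖emb p‖ = (m : ℝ) := by
    rw [EisensteinSeries.norm_eq_max_natAbs]
    simp [emb, hm]
  rw [hnorm]
  have hmR : (1:ℝ) ≤ (m:ℝ) := by exact_mod_cast hm1
  have hr : (m:ℝ) ^ (-(4:ℝ)) = ((m:ℝ)^(4:ℕ))⁻¹ := by
    rw [show (-(4:ℝ)) = ((-4 : ℤ):ℝ) by norm_num, Real.rpow_intCast]
    norm_num
  rw [hr]
  have hub : ((m:ℝ))^2 ≤ (inorm p.1 : ℝ) := by exact_mod_cast inorm_ge p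
  have h3 := three_le p
  rw [F, ← div_eq_mul_inv, le_div_iff₀ (by positivity)]
  have h1 : ((m:ℝ))^2 ≤ ((inorm p.1 : ℝ) - 1) * 2 := by nlinarith
  calc (((inorm p.1 : ℝ) - 1) ^ 2)⁻¹ * (m:ℝ) ^ 4
      = ((m:ℝ)^2)^2 / ((inorm p.1 : ℝ) - 1)^2 := by ring
    _ ≤ (((inorm p.1 : ℝ) - 1) * 2)^2 / ((inorm p.1 : ℝ) - 1)^2 := by
        apply div_le_div_of_nonneg_right ?_ (by nlinarith)
        · nlinarith
    _ = 4 := by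
        have hne : ((inorm p.1:ℝ) - 1)^2 ≠ 0 := by nlinarith
        rw [mul_pow, mul_comm, mul_div_assoc, div_self hne, mul_one]
        norm_num

lemma summable_F : Summable F := by
  have hs : Summable (fun x : Fin 2 → ℤ => 4 * ‖x‖ ^ (-(4:ℝ))) :=
    (EisensteinSeries.summable_one_div_norm_rpow (by norm_num)).mul_left 4
  exact Summable.of_nonneg_of_le F_nonneg F_le (hs.comp_injective emb_inj)

lemma abs_log_le (p : S) : |Real.log (1 - F p)| ≤ 2 * F p := by
  set x := F p with hx
  have h0 : 0 ≤ x := F_nonneg p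
  have h4 : x ≤ 4⁻¹ := F_le_quarter p
  have h1 : (0:ℝ) < 1 - x := by linarith
  have hle : Real.log (1 - x) ≤ 0 := Real.log_nonpos (by linarith) (by linarith)
  have h2 : -Real.log (1 - x) ≤ (1 - x)⁻¹ - 1 := by
    have := Real.log_le_sub_one_of_pos (inv_pos.mpr h1)
    rwa [Real.log_inv] at this
  have h3 : (1 - x)⁻¹ - 1 ≤ 2 * x := by
    have : (1 - x)⁻¹ - 1 = x / (1 - x) := by field_simp; ring
    rw [this, div_le_iff₀ h1]
    nlinarith
  rw [abs_of_nonpos hle]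
  linarith

lemma summable_log : Summable (fun p : S => Real.log (1 - F p)) := by
  apply Summable.of_abs
  exact Summable.of_nonneg_of_le (fun p => abs_nonneg _) abs_log_le (summable_F.mul_left 2)

lemma F_lt_one (p : S) : 0 < 1 - F p := by
  have := F_le_quarter p
  linarith

lemma multipliable_main :
    Multipliable (fun p : S => (1 - (((inorm p.1 : ℝ) - 1) ^ 2)⁻¹)) :=
  Real.multipliable_of_summable_log (fun p => F_lt_one p) summable_log

lemma tprod_pos : 0 < ∏' p : S, (1 - (((inorm p.1 : ℝ) - 1) ^ 2)⁻¹) := by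
  have h2 := Real.rexp_tsum_eq_tprod (f := fun p : S => 1 - F p)
    (fun p => F_lt_one p) summable_log
  have h3 : 0 < ∏' n : S, (1 - F n) := by rw [← h2]; exact Real.exp_pos _
  exact h3


lemma finprod_part_pos (N : GaussianInt) (hN : N ≠ 0) :
    0 < ∏ᶠ (p : Ideal GaussianInt)
        (_ : p.IsPrime ∧ p ≠ ⊥ ∧ 2 < inorm p ∧ p ∣ Ideal.span {N}),
      ((inorm p : ℝ) - 1) / ((inorm p : ℝ) - 2) := by
  classical
  have hspan : Ideal.span {N} ≠ 0 := by
    simpa [Ideal.span_singleton_eq_bot, Submodule.zero_eq_bot] using hN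
  have hfin : {p : Ideal GaussianInt |
      p.IsPrime ∧ p ≠ ⊥ ∧ 2 < inorm p ∧ p ∣ Ideal.span {N}}.Finite := by
    have h := Ideal.finite_factors hspan
    refine (h.image (fun v => v.asIdeal)).subset ?_
    rintro p ⟨h1, h2, h3, h4⟩
    exact ⟨⟨p, h1, h2⟩, h4, rfl⟩
  set G := fun p : Ideal GaussianInt =>
    ∏ᶠ (_ : p.IsPrime ∧ p ≠ ⊥ ∧ 2 < inorm p ∧ p ∣ Ideal.span {N}),
      ((inorm p : ℝ) - 1) / ((inorm p : ℝ) - 2) with hGdef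
  have hGif : ∀ p, G p = if p.IsPrime ∧ p ≠ ⊥ ∧ 2 < inorm p ∧ p ∣ Ideal.span {N} then
      ((inorm p : ℝ) - 1) / ((inorm p : ℝ) - 2) else 1 := by
    intro p
    exact finprod_eq_if
  have hG : ∀ p, 0 < G p := by
    intro p
    rw [hGif]
    split_ifs with hq
    · have h3 : (3:ℝ) ≤ (inorm p : ℝ) := by exact_mod_cast hq.2.2.1
      exact div_pos (by linarith) (by linarith)
    · norm_num
  have hsub : Function.mulSupport G ⊆ ↑hfin.toFinset := by
    intro p hp
    simp only [Set.Finite.coe_toFinset]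
    by_contra h
    exact hp (by rw [hGif, if_neg (by simpa using h)])
  rw [show (∏ᶠ (p : Ideal GaussianInt)
        (_ : p.IsPrime ∧ p ≠ ⊥ ∧ 2 < inorm p ∧ p ∣ Ideal.span {N}),
      ((inorm p : ℝ) - 1) / ((inorm p : ℝ) - 2)) = ∏ᶠ p, G p from rfl,
    finprod_eq_prod_of_mulSupport_subset G hsub]
  exact Finset.prod_pos fun p _ => hG p

/-- The infinite product in `𝔖₁` converges, and `𝔖₁(N) > 0` for every even
nonzero Gaussian integer `N`. -/
theorem singularSeries_pos_gaussian :
    Multipliable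
      (fun p : {p : Ideal GaussianInt // p.IsPrime ∧ p ≠ ⊥ ∧ 2 < inorm p} =>
        (1 - (((inorm p.1 : ℝ) - 1) ^ 2)⁻¹)) ∧
      ∀ N : GaussianInt, N ≠ 0 → (⟨1, 1⟩ : GaussianInt) ∣ N →
        0 < singularSeries N := by
  refine ⟨multipliable_main, ?_⟩
  intro N hN _
  rw [singularSeries]
  exact mul_pos tprod_pos (finprod_part_pos N hN)
end
end

section
/- The double integral ∫_{1/8}^{1/3} ∫_{1/3}^{(1-w)/2} 1/(v·w·(1-v-w)) dv dw equals ∫_{1/8}^{1/3} log(2-3w)/(w(1-w)) dw, and this value c satisfies 0 < c < 2 log 3 - log 6. -/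
noncomputable section

/-- Key inequality: `2 x log x ≤ x² - 1` for `x ≥ 1`. -/
lemma two_mul_log_le (x : ℝ) (hx : 1 ≤ x) : 2 * x * Real.log x ≤ x^2 - 1 := by
  rcases eq_or_lt_of_le hx with h | h
  · simp [← h]
  · have hx0 : (0:ℝ) < x := by linarith
    have hs : Real.log x < Real.sinh (Real.log x) := Real.self_lt_sinh_iff.mpr (Real.log_pos h)
    rw [Real.sinh_eq, Real.exp_log hx0, Real.exp_neg, Real.exp_log hx0] at hs
    have hinv : x * x⁻¹ = 1 := mul_inv_cancel₀ hx0.ne'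
    nlinarith [hs, hinv]

/-- The inner integral, computed by the fundamental theorem of calculus. -/
lemma inner_integral_eq (w : ℝ) (hw1 : 1/8 ≤ w) (hw2 : w ≤ 1/3) :
    (∫ v in (1/3 : ℝ)..((1 - w)/2), (v * w * (1 - v - w))⁻¹)
      = Real.log (2 - 3*w) / (w * (1 - w)) := by
  have hw0 : 0 < w := by linarith
  have h1w : (0:ℝ) < 1 - w := by linarith
  have hb : (1/3 : ℝ) ≤ (1 - w)/2 := by linarith
  have huA : Set.uIcc (1/3 : ℝ) ((1-w)/2) = Set.Icc (1/3) ((1-w)/2) := Set.uIcc_of_le hb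
  have hderiv : ∀ v ∈ Set.uIcc (1/3 : ℝ) ((1-w)/2),
      HasDerivAt (fun v => (w * (1 - w))⁻¹ * (Real.log v - Real.log (1 - w - v)))
        ((v * w * (1 - v - w))⁻¹) v := by
    intro v hv
    rw [huA, Set.mem_Icc] at hv
    have hv0 : 0 < v := by linarith [hv.1]
    have hv1 : 0 < 1 - w - v := by linarith [hv.2]
    have h1 : HasDerivAt (fun v : ℝ => Real.log v) v⁻¹ v := Real.hasDerivAt_log hv0.ne'
    have h2 : HasDerivAt (fun v : ℝ => 1 - w - v) (-1) v := by
      simpa using (hasDerivAt_id v).const_sub (1 - w)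
    have h3 : HasDerivAt (fun v : ℝ => Real.log (1 - w - v)) ((1 - w - v)⁻¹ * (-1)) v :=
      (Real.hasDerivAt_log hv1.ne').comp v h2
    have h4 := (h1.sub h3).const_mul ((w * (1 - w))⁻¹)
    have heq : (v * w * (1 - v - w))⁻¹
        = (w * (1 - w))⁻¹ * (v⁻¹ - (1 - w - v)⁻¹ * (-1)) := by
      have e : (1:ℝ) - v - w ≠ 0 := by linarith
      field_simp
      ring
    rw [heq]
    exact h4
  have hint : IntervalIntegrable (fun v => (v * w * (1 - v - w))⁻¹)
      MeasureTheory.volume (1/3) ((1-w)/2) := by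
    apply ContinuousOn.intervalIntegrable
    apply ContinuousOn.inv₀
    · fun_prop
    · intro v hv
      rw [huA, Set.mem_Icc] at hv
      have : 0 < v * w * (1 - v - w) := by
        apply mul_pos (mul_pos (by linarith [hv.1]) hw0)
        linarith [hv.2]
      exact this.ne'
  rw [intervalIntegral.integral_eq_sub_of_hasDerivAt hderiv hint]
  rw [show (1:ℝ) - w - (1-w)/2 = (1-w)/2 from by ring,
      show (1:ℝ) - w - 1/3 = 2/3 - w from by ring]
  have hlog : Real.log (2 - 3*w) = Real.log (2/3 - w) - Real.log (1/3) := by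
    rw [show (2:ℝ) - 3*w = (2/3 - w)/(1/3) from by ring,
      Real.log_div (by linarith) (by norm_num)]
  rw [hlog]
  field_simp
  ring

/-- The value of the comparison integral. -/
lemma bound_integral_eq :
    (∫ w in (1/8 : ℝ)..(1/3 : ℝ), 3*(1 - 3*w)/(2*(w*(2 - 3*w))))
      = 3/4 * Real.log (64/39) := by
  have hderiv : ∀ w ∈ Set.uIcc (1/8 : ℝ) (1/3 : ℝ),
      HasDerivAt (fun w => 3/4 * (Real.log w + Real.log (2 - 3*w)))
        (3*(1 - 3*w)/(2*(w*(2 - 3*w)))) w := by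
    intro w hw
    rw [Set.uIcc_of_le (by norm_num : (1/8:ℝ) ≤ 1/3), Set.mem_Icc] at hw
    have hw0 : 0 < w := by linarith [hw.1]
    have hw2 : 0 < 2 - 3*w := by linarith [hw.2]
    have h1 : HasDerivAt (fun w : ℝ => Real.log w) w⁻¹ w := Real.hasDerivAt_log hw0.ne'
    have h2 : HasDerivAt (fun w : ℝ => 2 - 3*w) (-3) w := by
      simpa using ((hasDerivAt_id w).const_mul (3:ℝ)).const_sub 2
    have h3 : HasDerivAt (fun w : ℝ => Real.log (2 - 3*w)) ((2 - 3*w)⁻¹ * (-3)) w :=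
      by have := (Real.hasDerivAt_log hw2.ne').comp w h2; exact this
    have h4 := (h1.add h3).const_mul ((3:ℝ)/4)
    have heq : 3*(1 - 3*w)/(2*(w*(2 - 3*w))) = 3/4 * (w⁻¹ + (2 - 3*w)⁻¹ * (-3)) := by
      field_simp
      ring
    rw [heq]
    exact h4
  have hint : IntervalIntegrable (fun w => 3*(1 - 3*w)/(2*(w*(2 - 3*w))))
      MeasureTheory.volume (1/8 : ℝ) (1/3 : ℝ) := by
    apply ContinuousOn.intervalIntegrable
    apply ContinuousOn.div
    · fun_prop
    · fun_prop
    · intro w hw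
      rw [Set.uIcc_of_le (by norm_num : (1/8:ℝ) ≤ 1/3), Set.mem_Icc] at hw
      have : 0 < 2*(w*(2 - 3*w)) := by nlinarith [hw.1, hw.2]
      exact this.ne'
  rw [intervalIntegral.integral_eq_sub_of_hasDerivAt hderiv hint]
  rw [show (2:ℝ) - 3*(1/3) = 1 from by norm_num, show (2:ℝ) - 3*(1/8) = 13/8 from by norm_num,
    Real.log_one]
  have h13 : Real.log (1/8 : ℝ) + Real.log (13/8 : ℝ) = Real.log (13/64 : ℝ) := by
    rw [← Real.log_mul (by norm_num) (by norm_num)]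
    norm_num
  have h2 : Real.log (1/3 : ℝ) - Real.log (13/64 : ℝ) = Real.log (64/39 : ℝ) := by
    rw [← Real.log_div (by norm_num) (by norm_num)]
    norm_num
  have := h13
  nlinarith [h13, h2]

/-- The double integral `∫_{1/8}^{1/3} ∫_{1/3}^{(1-w)/2} dv dw /(vw(1-v-w))` equals
`∫_{1/8}^{1/3} log(2-3w)/(w(1-w)) dw =: c`, and `0 < c < 2 log 3 - log 6`. -/
theorem double_integral_value :
    (∫ w in (1/8 : ℝ)..(1/3 : ℝ), ∫ v in (1/3 : ℝ)..((1 - w)/2),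
        (v * w * (1 - v - w))⁻¹) =
      (∫ w in (1/8 : ℝ)..(1/3 : ℝ), Real.log (2 - 3*w) / (w * (1 - w))) ∧
      0 < (∫ w in (1/8 : ℝ)..(1/3 : ℝ), Real.log (2 - 3*w) / (w * (1 - w))) ∧
      (∫ w in (1/8 : ℝ)..(1/3 : ℝ), Real.log (2 - 3*w) / (w * (1 - w))) <
        2 * Real.log 3 - Real.log 6 := by
  have hint_g : IntervalIntegrable (fun w => Real.log (2 - 3*w) / (w * (1 - w)))
      MeasureTheory.volume (1/8 : ℝ) (1/3 : ℝ) := by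
    apply ContinuousOn.intervalIntegrable
    apply ContinuousOn.div
    · apply ContinuousOn.log
      · fun_prop
      · intro w hw
        rw [Set.uIcc_of_le (by norm_num : (1/8:ℝ) ≤ 1/3), Set.mem_Icc] at hw
        have : 0 < 2 - 3*w := by linarith [hw.2]
        exact this.ne'
    · fun_prop
    · intro w hw
      rw [Set.uIcc_of_le (by norm_num : (1/8:ℝ) ≤ 1/3), Set.mem_Icc] at hw
      have : 0 < w * (1 - w) := mul_pos (by linarith [hw.1]) (by linarith [hw.2])
      exact this.ne'
  refine ⟨?_, ?_, ?_⟩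
  · apply intervalIntegral.integral_congr
    intro w hw
    rw [Set.uIcc_of_le (by norm_num : (1/8:ℝ) ≤ 1/3), Set.mem_Icc] at hw
    exact inner_integral_eq w hw.1 hw.2
  · apply intervalIntegral.intervalIntegral_pos_of_pos_on hint_g _ (by norm_num)
    intro w hw
    rw [Set.mem_Ioo] at hw
    have h1 : 0 < Real.log (2 - 3*w) := Real.log_pos (by linarith [hw.2])
    exact div_pos h1 (mul_pos (by linarith [hw.1]) (by linarith [hw.2]))
  · have hint_h : IntervalIntegrable (fun w => 3*(1 - 3*w)/(2*(w*(2 - 3*w))))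
        MeasureTheory.volume (1/8 : ℝ) (1/3 : ℝ) := by
      apply ContinuousOn.intervalIntegrable
      apply ContinuousOn.div
      · fun_prop
      · fun_prop
      · intro w hw
        rw [Set.uIcc_of_le (by norm_num : (1/8:ℝ) ≤ 1/3), Set.mem_Icc] at hw
        have : 0 < 2*(w*(2 - 3*w)) := by nlinarith [hw.1, hw.2]
        exact this.ne'
    have hmono : (∫ w in (1/8 : ℝ)..(1/3 : ℝ), Real.log (2 - 3*w) / (w * (1 - w)))
        ≤ ∫ w in (1/8 : ℝ)..(1/3 : ℝ), 3*(1 - 3*w)/(2*(w*(2 - 3*w))) := by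
      apply intervalIntegral.integral_mono_on (by norm_num) hint_g hint_h
      intro w hw
      rw [Set.mem_Icc] at hw
      have hw0 : 0 < w := by linarith [hw.1]
      have hw1 : 0 < 1 - w := by linarith [hw.2]
      have hw2 : 0 < 2 - 3*w := by linarith [hw.2]
      have hkey := two_mul_log_le (2 - 3*w) (by linarith [hw.2])
      rw [div_le_div_iff₀ (mul_pos hw0 hw1) (by positivity)]
      nlinarith [mul_le_mul_of_nonneg_left hkey hw0.le]
    have hfin : 3/4 * Real.log (64/39 : ℝ) < 2 * Real.log 3 - Real.log 6 := by
      have hr : 2 * Real.log 3 - Real.log 6 = Real.log (3/2 : ℝ) := by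
        rw [show (6:ℝ) = 3*2 from by norm_num, Real.log_mul (by norm_num) (by norm_num),
          Real.log_div (by norm_num) (by norm_num)]
        ring
      have h1 : Real.log (((64:ℝ)/39)^3) = 3 * Real.log ((64:ℝ)/39) := by
        rw [Real.log_pow]; norm_num
      have h2 : Real.log (((3:ℝ)/2)^4) = 4 * Real.log ((3:ℝ)/2) := by
        rw [Real.log_pow]; norm_num
      have h3 : Real.log (((64:ℝ)/39)^3) < Real.log (((3:ℝ)/2)^4) :=
        Real.log_lt_log (by positivity) (by norm_num)
      rw [hr]
      linarith [h3, h1.symm.le, h2.symm.le]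
    linarith [hmono, bound_integral_eq, hfin]
end
end
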